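/- arXiv:2309.08224 — 3 statements merged into one kernel-verified Lean document; each statement's English description precedes it below -/
import Mathlib

section
/- Let H : ℝ → ℝ be continuous and coercive and F0 : ℝ → ℝ be continuous, non-increasing and semi-coercive. Let p ∈ ℝ with F0(p) ≥ H(p), and let q ≥ p be minimal with the property that (R̲F0)(p) = min(F0(q), H(q)) (i.e. q satisfies this equality and no q' ∈ [p, q) does). Then F0(q) ≥ H(q), R̲F0 is constant equal to H(q) on the interval [p, q], and H(q') < H(q) for every q' ∈ [p, q). -/
open Set Filter

attribute [local instance] Classical.propDecidable

noncomputable section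

/-- `H` is coercive: `H p → +∞` as `|p| → +∞`. -/
def Coercive (H : ℝ → ℝ) : Prop := Tendsto H (cocompact ℝ) atTop

/-- `F` is semi-coercive: `F p → +∞` as `p → -∞`. -/
def SemiCoercive (F : ℝ → ℝ) : Prop := Tendsto F atBot atTop

/-- Sub-relaxation: `(R̲F)(p) = sup_{q ≥ p} min (F q) (H q)`. -/
def subR (H F : ℝ → ℝ) (p : ℝ) : ℝ := sSup ((fun q => min (F q) (H q)) '' Ici p)

/-- Super-relaxation: `(R̄F)(p) = inf_{q ≤ p} max (F q) (H q)`. -/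
def supR (H F : ℝ → ℝ) (p : ℝ) : ℝ := sInf ((fun q => max (F q) (H q)) '' Iic p)

/-- Relaxation operator: `R̲F` where `F ≥ H`, `R̄F` where `F ≤ H`. -/
def relax (H F : ℝ → ℝ) (p : ℝ) : ℝ := if H p ≤ F p then subR H F p else supR H F p

/-- `p` is a negative characteristic point of `F` relative to `H`. -/
def negChar (H F : ℝ → ℝ) (p : ℝ) : Prop :=
  H p = F p ∧ ∃ ε > 0, ∀ q ∈ Ioo (p - ε) p, H q < H p

/-- `p` is a positive characteristic point of `F` relative to `H`. -/
def posChar (H F : ℝ → ℝ) (p : ℝ) : Prop :=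
  H p = F p ∧ ∃ ε > 0, ∀ q ∈ Ioo p (p + ε), H p < H q

/-- The upper point `p⁺ ∈ ℝ ∪ {+∞}` associated with `p` and `H`. -/
def upperPt (H : ℝ → ℝ) (p : ℝ) : EReal :=
  if ∀ ε > 0, ∃ q, p < q ∧ q < p + ε ∧ H q ≤ H p then (p : EReal)
  else sSup ((fun q : ℝ => (q : EReal)) '' {q : ℝ | p < q ∧ ∀ r ∈ Ioo p q, H p < H r})

/-- The lower point `p⁻` associated with `p` and `H`. -/
def lowerPt (H : ℝ → ℝ) (p : ℝ) : ℝ :=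
  if ∀ ε > 0, ∃ q, p - ε < q ∧ q < p ∧ H p ≤ H q then p
  else sInf {q : ℝ | q < p ∧ ∀ r ∈ Ioo q p, H r < H p}

/-- `p` is a positive limiter point of `F`. -/
def posLimiter (H F : ℝ → ℝ) (p : ℝ) : Prop :=
  (p : EReal) < upperPt H p ∧ F p ≤ H p ∧
    ∀ q : ℝ, H q < H p → F q ≤ H q →
      {r : ℝ | lowerPt H q < r ∧ (r : EReal) < upperPt H q} ∩
        {r : ℝ | p < r ∧ (r : EReal) < upperPt H p} = ∅

/-- `p` is a negative limiter point of `F`. -/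
def negLimiter (H F : ℝ → ℝ) (p : ℝ) : Prop :=
  lowerPt H p < p ∧ H p ≤ F p ∧
    ∀ q : ℝ, H q ≤ F q → H p < H q →
      {r : ℝ | lowerPt H q < r ∧ (r : EReal) < upperPt H q} ∩ Ioo (lowerPt H p) p = ∅

/-- The Godunov flux associated with `H`. -/
def godunov (H : ℝ → ℝ) (q p : ℝ) : ℝ :=
  if p ≤ q then sSup (H '' Icc p q) else sInf (H '' Icc q p)

/-- The lower (set-valued) Godunov semi-flux `G̲(q,p)`, as a subset of the extended reals. -/
def subG (H : ℝ → ℝ) (q p : ℝ) : Set EReal :=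
  if q < p then {⊥}
  else if q = p then Iic ((H p : ℝ) : EReal)
  else {((godunov H q p : ℝ) : EReal)}

/-- The upper (set-valued) Godunov semi-flux `Ḡ(q,p)`, as a subset of the extended reals. -/
def supG (H : ℝ → ℝ) (q p : ℝ) : Set EReal :=
  if q < p then {((godunov H q p : ℝ) : EReal)}
  else if q = p then Ici ((H p : ℝ) : EReal)
  else {⊤}

open Topology

lemma lt_of_min_lt_min_of_le {α : Type*} [LinearOrder α] {a b c d : α} (hca : c ≤ a)
    (h : min a b < min c d) : b < d := by
  contrapose! h
  exact min_le_min hca h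

section SubRelaxation

variable {H F : ℝ → ℝ}

lemma bddAbove_image_min_Ici (hFa : Antitone F) (p : ℝ) :
    BddAbove ((fun q => min (F q) (H q)) '' Ici p) := by
  refine ⟨F p, ?_⟩
  rintro _ ⟨q, hq, rfl⟩
  exact (min_le_left _ _).trans (hFa hq)

lemma min_le_subR (hFa : Antitone F) {p q : ℝ} (hpq : p ≤ q) :
    min (F q) (H q) ≤ subR H F p :=
  le_csSup (bddAbove_image_min_Ici hFa p) ⟨q, hpq, rfl⟩

lemma subR_antitone (hFa : Antitone F) : Antitone (subR H F) := fun p _ hpr =>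
  csSup_le_csSup (bddAbove_image_min_Ici hFa p) (nonempty_Ici.image _)
    (image_mono (Ici_subset_Ici.mpr hpr))

/-- Were `F q < H q`, then by continuity `F < H` also just to the left of `q`, where
`min F H = F ≥ F q = min (F q) (H q)`. -/
lemma le_of_forall_Ico_min_lt (hF : Continuous F) (hH : Continuous H) (hFa : Antitone F)
    {p q : ℝ} (hpq : p < q)
    (hlt : ∀ q' ∈ Ico p q, min (F q') (H q') < min (F q) (H q)) : H q ≤ F q := by
  by_contra! hq
  have hleft : ∀ᶠ x in 𝓝[<] q, F x < H x ∧ x ∈ Ioo p q :=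
    (eventually_nhdsWithin_of_eventually_nhds ((isOpen_lt hF hH).eventually_mem hq)).and
      (Ioo_mem_nhdsLT hpq)
  obtain ⟨x, hFHx, hpx, hxq⟩ := hleft.exists
  have hFx : F x < min (F q) (H q) := min_eq_left hFHx.le ▸ hlt x ⟨hpx.le, hxq⟩
  exact (hFx.trans_le ((min_le_left _ _).trans (hFa hxq.le))).false

end SubRelaxation

theorem subR_optimality_general (H F0 : ℝ → ℝ)
    (hH : Continuous H)
    (hF : Continuous F0) (hFa : Antitone F0)
    (p q : ℝ) (hpF : H p ≤ F0 p) (hpq : p ≤ q)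
    (heq : subR H F0 p = min (F0 q) (H q))
    (hmin : ∀ q' ∈ Ico p q, subR H F0 p ≠ min (F0 q') (H q')) :
    H q ≤ F0 q ∧
    (∀ r ∈ Icc p q, subR H F0 r = H q) ∧
    (∀ q' ∈ Ico p q, H q' < H q) := by
  have hlt : ∀ q' ∈ Ico p q, min (F0 q') (H q') < min (F0 q) (H q) := fun q' hq' =>
    heq ▸ (min_le_subR hFa hq'.1).lt_of_ne (hmin q' hq').symm
  have hHF : H q ≤ F0 q := by
    rcases hpq.eq_or_lt with rfl | hpq
    · exact hpF
    · exact le_of_forall_Ico_min_lt hF hH hFa hpq hlt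
  have hsubR : subR H F0 p = H q := heq.trans (min_eq_right hHF)
  refine ⟨hHF, fun r hr => le_antisymm ?_ ?_, fun q' hq' => ?_⟩
  · exact hsubR ▸ subR_antitone hFa hr.1
  · exact min_eq_right hHF ▸ min_le_subR hFa hr.2
  · exact lt_of_min_lt_min_of_le (hFa hq'.2.le) (hlt q' hq')

/-- Optimality properties of `R̲F0`. -/
theorem subR_optimality (H F0 : ℝ → ℝ)
    (hH : Continuous H) (hHc : Coercive H)
    (hF : Continuous F0) (hFa : Antitone F0) (hFs : SemiCoercive F0)
    (p q : ℝ) (hpF : H p ≤ F0 p) (hpq : p ≤ q)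
    (heq : subR H F0 p = min (F0 q) (H q))
    (hmin : ∀ q' ∈ Ico p q, subR H F0 p ≠ min (F0 q') (H q')) :
    H q ≤ F0 q ∧
    (∀ r ∈ Icc p q, subR H F0 r = H q) ∧
    (∀ q' ∈ Ico p q, H q' < H q) :=
  subR_optimality_general H F0 hH hF hFa p q hpF hpq heq hmin
end
end

section
/- Let H : ℝ → ℝ be continuous and coercive and F0 : ℝ → ℝ be continuous, non-increasing and semi-coercive. (i) If p ∈ χ⁺(R̄F0), then p⁺ > p, R̄F0 is constant equal to H(p) on (p, p⁺), H > H(p) on (p, p⁺), and moreover H(p⁺) = H(p) whenever p⁺ < +∞. (ii) If p ∈ χ⁻(R̲F0), then p⁻ < p, R̲F0 is constant equal to H(p) on (p⁻, p), H < H(p) on (p⁻, p), and H(p⁻) = H(p). -/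
/-!
On the right of a positive characteristic point `p` of `R̄F₀`, the Hamiltonian rises above `H p`
until `p⁺`, so the infimum defining `R̄F₀ q` for `p < q < p⁺` gains no new value below
`R̄F₀ p = H p`; at a finite `p⁺` continuity forces `H p⁺ = H p`, since otherwise the rising interval
would extend past `p⁺`. The statement for `R̲F₀` and negative characteristic points is the mirror
image under `f ↦ (x ↦ -f (-x))`, which exchanges `R̲` and `R̄`, `χ⁻` and `χ⁺`, and `p⁻` and `p⁺`.
-/

open Set Filter

attribute [local instance] Classical.propDecidable

noncomputable section

variable {H F : ℝ → ℝ} {p q r : ℝ}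

lemma bddBelow_image_max_Iic (hF : Antitone F) (q : ℝ) :
    BddBelow ((fun r => max (F r) (H r)) '' Iic q) :=
  ⟨F q, by rintro _ ⟨r, hr, rfl⟩; exact (hF hr).trans (le_max_left _ _)⟩

lemma supR_antitone (hF : Antitone F) : Antitone (supR H F) := fun p q hpq =>
  csInf_le_csInf (bddBelow_image_max_Iic hF q) ⟨_, p, self_mem_Iic, rfl⟩
    (image_mono (Iic_subset_Iic.2 hpq))

lemma supR_eq_of_le_forall_Ioc (hF : Antitone F) (hpq : p ≤ q)
    (h : ∀ r ∈ Ioc p q, supR H F p ≤ H r) : supR H F q = supR H F p := by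
  refine le_antisymm (supR_antitone hF hpq) (le_csInf ⟨_, q, self_mem_Iic, rfl⟩ ?_)
  rintro _ ⟨r, hrq, rfl⟩
  rcases le_or_gt r p with hrp | hpr
  · exact csInf_le (bddBelow_image_max_Iic hF p) ⟨r, hrp, rfl⟩
  · exact (h r ⟨hpr, hrq⟩).trans (le_max_right _ _)

section Rising

variable (hrise : ∃ ε > 0, ∀ q ∈ Ioo p (p + ε), H p < H q)
include hrise

lemma upperPt_eq_sSup :
    upperPt H p = sSup ((↑) '' {q : ℝ | p < q ∧ ∀ r ∈ Ioo p q, H p < H r}) := by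
  obtain ⟨ε, hε, hup⟩ := hrise
  refine if_neg fun h => ?_
  obtain ⟨q, hpq, hqε, hq⟩ := h ε hε
  exact (hup q ⟨hpq, hqε⟩).not_ge hq

lemma coe_lt_upperPt : (p : EReal) < upperPt H p := by
  rw [upperPt_eq_sSup hrise]
  obtain ⟨ε, hε, hup⟩ := hrise
  exact (EReal.coe_lt_coe_iff.2 (lt_add_of_pos_right p hε)).trans_le
    (le_sSup ⟨p + ε, ⟨lt_add_of_pos_right p hε, hup⟩, rfl⟩)

lemma lt_apply_of_lt_upperPt (hpr : p < r) (hr : (r : EReal) < upperPt H p) : H p < H r := by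
  rw [upperPt_eq_sSup hrise, lt_sSup_iff] at hr
  obtain ⟨_, ⟨q, ⟨-, hq⟩, rfl⟩, hrq⟩ := hr
  exact hq r ⟨hpr, EReal.coe_lt_coe_iff.1 hrq⟩

lemma apply_eq_of_upperPt_eq (hH : Continuous H) (hr : upperPt H p = r) : H r = H p := by
  have hpr : p < r := EReal.coe_lt_coe_iff.1 (hr ▸ coe_lt_upperPt hrise)
  have hIoo : ∀ s ∈ Ioo p r, H p < H s := fun s hs =>
    lt_apply_of_lt_upperPt hrise hs.1 (hr ▸ EReal.coe_lt_coe_iff.2 hs.2)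
  have hge : H p ≤ H r := by
    refine (isClosed_le continuous_const hH).closure_subset_iff.2 (fun s hs => (hIoo s hs).le) ?_
    rw [closure_Ioo hpr.ne]
    exact right_mem_Icc.2 hpr.le
  refine le_antisymm ?_ hge
  by_contra! hlt
  -- the rising interval would then extend beyond `r`
  obtain ⟨u, hru, hu⟩ := exists_Ico_subset_of_mem_nhds
    ((isOpen_lt continuous_const hH).mem_nhds hlt) ⟨r + 1, lt_add_one r⟩
  have hmem : u ∈ {q : ℝ | p < q ∧ ∀ s ∈ Ioo p q, H p < H s} := by
    refine ⟨hpr.trans hru, fun s hs => ?_⟩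
    rcases lt_or_ge s r with hsr | hrs
    · exact hIoo s ⟨hs.1, hsr⟩
    · exact hu ⟨hrs, hs.2⟩
  have : (u : EReal) ≤ r := hr ▸ upperPt_eq_sSup hrise ▸ le_sSup ⟨u, hmem, rfl⟩
  exact (EReal.coe_le_coe_iff.1 this).not_gt hru

end Rising

theorem posChar_supR (hH : Continuous H) (hF : Antitone F) (hp : posChar H (supR H F) p) :
    (p : EReal) < upperPt H p ∧
      (∀ q : ℝ, p < q → (q : EReal) < upperPt H p → supR H F q = H p ∧ H p < H q) ∧
      (∀ r : ℝ, upperPt H p = (r : EReal) → H r = H p) := by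
  obtain ⟨hpF, hrise⟩ := hp
  have hlt : ∀ r, p < r → (r : EReal) < upperPt H p → H p < H r :=
    fun r => lt_apply_of_lt_upperPt hrise
  refine ⟨coe_lt_upperPt hrise, fun q hpq hq => ⟨?_, hlt q hpq hq⟩,
    fun r => apply_eq_of_upperPt_eq hrise hH⟩
  rw [hpF, supR_eq_of_le_forall_Ioc hF hpq.le fun r hr =>
    hpF ▸ (hlt r hr.1 ((EReal.coe_le_coe_iff.2 hr.2).trans_lt hq)).le]

def pointReflect (f : ℝ → ℝ) (x : ℝ) : ℝ := -f (-x)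

@[simp] lemma pointReflect_apply (f : ℝ → ℝ) (x : ℝ) : pointReflect f x = -f (-x) := rfl

lemma Continuous.pointReflect (hH : Continuous H) : Continuous (pointReflect H) :=
  (hH.comp continuous_neg).neg

lemma Antitone.pointReflect (hF : Antitone F) : Antitone (pointReflect F) :=
  fun _ _ hxy => neg_le_neg (hF (neg_le_neg hxy))

lemma pointReflect_subR : pointReflect (subR H F) = supR (pointReflect H) (pointReflect F) := by
  funext p
  have himage : (fun q => max (pointReflect F q) (pointReflect H q)) '' Iic p =
      -((fun q => min (F q) (H q)) '' Ici (-p)) := by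
    rw [← image_neg_eq_neg, ← image_neg_Iic, image_image, image_image]
    simp only [pointReflect_apply, max_neg_neg]
  rw [supR, himage, Real.sInf_neg, pointReflect_apply, subR]

lemma negChar_iff_posChar_pointReflect (G : ℝ → ℝ) :
    negChar H G p ↔ posChar (pointReflect H) (pointReflect G) (-p) := by
  simp only [negChar, posChar, pointReflect_apply, neg_neg, neg_inj, neg_lt_neg_iff]
  refine and_congr_right fun _ => exists_congr fun ε => and_congr_right fun _ =>
    ⟨fun h q hq => h (-q) ⟨by linarith [hq.2], by linarith [hq.1]⟩,
      fun h q hq => by simpa using h (-q) ⟨by linarith [hq.2], by linarith [hq.1]⟩⟩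

lemma bddBelow_falling_of_tendsto_atBot (hH : Tendsto H atBot atTop) (p : ℝ) :
    BddBelow {q | q < p ∧ ∀ r ∈ Ioo q p, H r < H p} := by
  obtain ⟨m, hm⟩ := eventually_atBot.1 (hH.eventually (eventually_ge_atTop (H p)))
  refine ⟨min m (p - 1), fun q ⟨_, hq⟩ => not_lt.1 fun hqm => ?_⟩
  exact (hq _ ⟨hqm, (min_le_right _ _).trans_lt (sub_one_lt p)⟩).not_ge (hm _ (min_le_left _ _))

lemma upperPt_pointReflect (hH : Tendsto H atBot atTop) (p : ℝ) :
    upperPt (pointReflect H) (-p) = ((-lowerPt H p : ℝ) : EReal) := by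
  have hcond :
      (∀ ε > 0, ∃ q, -p < q ∧ q < -p + ε ∧ pointReflect H q ≤ pointReflect H (-p)) ↔
      ∀ ε > 0, ∃ q, p - ε < q ∧ q < p ∧ H p ≤ H q := by
    simp only [pointReflect_apply, neg_neg, neg_le_neg_iff]
    refine forall₂_congr fun ε _ =>
      ⟨fun ⟨q, h₁, h₂, h₃⟩ => ⟨-q, by linarith, by linarith, h₃⟩,
        fun ⟨q, h₁, h₂, h₃⟩ => ⟨-q, by linarith, by linarith, by rwa [neg_neg]⟩⟩
  unfold upperPt lowerPt
  by_cases hc : ∀ ε > 0, ∃ q, p - ε < q ∧ q < p ∧ H p ≤ H q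
  · rw [if_pos (hcond.2 hc), if_pos hc]
  rw [if_neg (mt hcond.1 hc), if_neg hc]
  set T := {q | q < p ∧ ∀ r ∈ Ioo q p, H r < H p}
  have hS : {q | -p < q ∧ ∀ r ∈ Ioo (-p) q, pointReflect H (-p) < pointReflect H r} = -T := by
    ext q
    simp only [T, Set.mem_neg, mem_ofPred_eq, pointReflect_apply, neg_neg, neg_lt_neg_iff]
    refine and_congr neg_lt
      ⟨fun h r hr => by simpa using h (-r) ⟨by linarith [hr.2], by linarith [hr.1]⟩,
        fun h r hr => h (-r) ⟨by linarith [hr.2], by linarith [hr.1]⟩⟩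
  push Not at hc
  obtain ⟨ε, hε, hfall⟩ := hc
  have hne : T.Nonempty := ⟨p - ε, by linarith, fun r hr => hfall r hr.1 hr.2⟩
  rw [hS, ← EReal.coe_strictMono.monotone.map_csSup_of_continuousAt
    continuous_coe_real_ereal.continuousAt hne.neg
    (bddAbove_neg.2 (bddBelow_falling_of_tendsto_atBot hH p)), Real.sSup_neg]

theorem negChar_subR (hH : Continuous H) (hHb : Tendsto H atBot atTop) (hF : Antitone F)
    (hp : negChar H (subR H F) p) :
    lowerPt H p < p ∧
      (∀ q ∈ Ioo (lowerPt H p) p, subR H F q = H p ∧ H q < H p) ∧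
      H (lowerPt H p) = H p := by
  rw [negChar_iff_posChar_pointReflect, pointReflect_subR] at hp
  obtain ⟨hlt, hconst, hend⟩ := posChar_supR hH.pointReflect hF.pointReflect hp
  rw [upperPt_pointReflect hHb, EReal.coe_lt_coe_iff, neg_lt_neg_iff] at hlt
  refine ⟨hlt, fun q hq => ?_, by simpa using hend _ (upperPt_pointReflect hHb p)⟩
  have hq' : ((-q : ℝ) : EReal) < upperPt (pointReflect H) (-p) := by
    rw [upperPt_pointReflect hHb]
    exact_mod_cast neg_lt_neg hq.1
  simpa [← pointReflect_subR] using hconst (-q) (neg_lt_neg hq.2) hq'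

theorem characteristic_points_and_semi_relaxations_general (H F0 : ℝ → ℝ)
    (hH : Continuous H) (hHc : Coercive H)
    (hFa : Antitone F0) (p : ℝ) :
    (posChar H (supR H F0) p →
      (p : EReal) < upperPt H p ∧
      (∀ q : ℝ, p < q → (q : EReal) < upperPt H p → supR H F0 q = H p ∧ H p < H q) ∧
      (∀ r : ℝ, upperPt H p = (r : EReal) → H r = H p)) ∧
    (negChar H (subR H F0) p →
      lowerPt H p < p ∧
      (∀ q ∈ Ioo (lowerPt H p) p, subR H F0 q = H p ∧ H q < H p) ∧
      H (lowerPt H p) = H p) :=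
  ⟨posChar_supR hH hFa, negChar_subR hH (hHc.mono_left atBot_le_cocompact) hFa⟩

/-- Characteristic points and the semi-relaxation operators. -/
theorem characteristic_points_and_semi_relaxations (H F0 : ℝ → ℝ)
    (hH : Continuous H) (hHc : Coercive H)
    (hF : Continuous F0) (hFa : Antitone F0) (hFs : SemiCoercive F0) (p : ℝ) :
    (posChar H (supR H F0) p →
      (p : EReal) < upperPt H p ∧
      (∀ q : ℝ, p < q → (q : EReal) < upperPt H p → supR H F0 q = H p ∧ H p < H q) ∧
      (∀ r : ℝ, upperPt H p = (r : EReal) → H r = H p)) ∧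
    (negChar H (subR H F0) p →
      lowerPt H p < p ∧
      (∀ q ∈ Ioo (lowerPt H p) p, subR H F0 q = H p ∧ H q < H p) ∧
      H (lowerPt H p) = H p) :=
  characteristic_points_and_semi_relaxations_general H F0 hH hHc hFa p
end
end

section
/- Let H : ℝ → ℝ be continuous and coercive and F0 : ℝ → ℝ be continuous, non-increasing and semi-coercive. Then the relaxation ℜF0 coincides with Guerand's relaxed boundary function: for every limiter point q ∈ A_{F0} = A⁺_{F0} ∪ A⁻_{F0} and every p ∈ [q⁻, q⁺] ∩ ℝ one has (ℜF0)(p) = H(q), and for every p ∈ ℝ that belongs to no interval [q⁻, q⁺] with q ∈ A_{F0} one has (ℜF0)(p) = H(p). -/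
open Set Filter

attribute [local instance] Classical.propDecidable

noncomputable section

/-!
If `H p < R̲F₀ p`, the supremum of `min F₀ H` over `[p, ∞)` is attained (`H` is coercive and
`F₀` decreasing), and its leftmost maximiser `q` is a negative limiter point with
`p ∈ [q⁻, q⁺]`; symmetrically, if `R̄F₀ p < H p`, the rightmost minimiser of `max F₀ H` on
`(-∞, p]` is a positive limiter point. Conversely, for a limiter point `q` one has
`R̲F₀ ≤ H q ≤ R̄F₀` on `[q⁻, q⁺]`: a violation would yield, as an extremal maximiser of
`min F₀ H` or minimiser of `max F₀ H` on a compact interval, a point `q'` whose interval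
`(q'⁻, q'⁺)` meets the one that the limiter condition on `q` requires it to miss.
-/

theorem IsClosed.Icc_subset_of_Ioo_subset {α : Type*} [TopologicalSpace α] [LinearOrder α]
    [DenselyOrdered α] [OrderTopology α] {s : Set α} {a b : α} (hs : IsClosed s) (hab : a < b)
    (h : Ioo a b ⊆ s) : Icc a b ⊆ s := by
  simpa only [closure_Ioo hab.ne] using hs.closure_subset_iff.2 h

theorem IsCompact.exists_greatest_isMinOn {α β : Type*}
    [ConditionallyCompleteLinearOrder α] [TopologicalSpace α] [OrderTopology α]
    [LinearOrder β] [TopologicalSpace β] [OrderClosedTopology β] {s : Set α} {g : α → β}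
    (hs : IsCompact s) (hne : s.Nonempty) (hg : ContinuousOn g s) :
    ∃ q ∈ s, IsMinOn g s q ∧ ∀ y ∈ s, q < y → g q < g y := by
  obtain ⟨m, hms, hm⟩ := hs.exists_isMinOn hne hg
  set M := s ∩ g ⁻¹' Iic (g m)
  have hM : IsCompact M := hs.of_isClosed_subset
    (hg.preimage_isClosed_of_isClosed hs.isClosed isClosed_Iic) inter_subset_left
  have hqM : sSup M ∈ M := hM.sSup_mem ⟨m, hms, le_rfl⟩
  refine ⟨sSup M, hqM.1, fun y hy => le_trans hqM.2 (hm hy), fun y hy hlt => ?_⟩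
  by_contra! hle
  exact hlt.not_ge (le_csSup hM.bddAbove ⟨hy, le_trans hle hqM.2⟩)

theorem IsCompact.exists_least_isMaxOn {α β : Type*}
    [ConditionallyCompleteLinearOrder α] [TopologicalSpace α] [OrderTopology α]
    [LinearOrder β] [TopologicalSpace β] [OrderClosedTopology β] {s : Set α} {g : α → β}
    (hs : IsCompact s) (hne : s.Nonempty) (hg : ContinuousOn g s) :
    ∃ q ∈ s, IsMaxOn g s q ∧ ∀ y ∈ s, y < q → g y < g q :=
  IsCompact.exists_greatest_isMinOn (α := αᵒᵈ) (β := βᵒᵈ) hs hne hg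

theorem Coercive.tendsto_atBot {H : ℝ → ℝ} (hHc : Coercive H) : Tendsto H atBot atTop :=
  hHc.mono_left (cocompact_eq_atBot_atTop (α := ℝ) ▸ le_sup_left)

theorem Coercive.tendsto_atTop {H : ℝ → ℝ} (hHc : Coercive H) : Tendsto H atTop atTop :=
  hHc.mono_left (cocompact_eq_atBot_atTop (α := ℝ) ▸ le_sup_right)

namespace Relaxation

variable {H F : ℝ → ℝ} {p q x : ℝ}

theorem bddBelow_setOf_forall_Ioo_lt (hHc : Coercive H) (q : ℝ) :
    BddBelow {a : ℝ | a ≤ q ∧ ∀ r ∈ Ioo a q, H r < H q} := by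
  obtain ⟨B, hB⟩ := eventually_atBot.1 (hHc.tendsto_atBot.eventually_ge_atTop (H q))
  refine ⟨min B (q - 1), fun a ha => ?_⟩
  by_contra! hlt
  have hr : min B (q - 1) ∈ Ioo a q := ⟨hlt, by linarith [min_le_right B (q - 1)]⟩
  exact (ha.2 _ hr).not_ge (hB _ (min_le_left _ _))

theorem lowerPt_eq_sInf (hHc : Coercive H) (q : ℝ) :
    lowerPt H q = sInf {a : ℝ | a ≤ q ∧ ∀ r ∈ Ioo a q, H r < H q} := by
  set T := {a : ℝ | a ≤ q ∧ ∀ r ∈ Ioo a q, H r < H q}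
  have hqT : q ∈ T := ⟨le_rfl, by simp⟩
  have hbdd := bddBelow_setOf_forall_Ioo_lt hHc q
  unfold lowerPt
  split_ifs with hdeg
  · refine le_antisymm (le_csInf ⟨q, hqT⟩ fun a ⟨haq, ha⟩ => ?_) (csInf_le hbdd hqT)
    by_contra! hlt
    obtain ⟨r, h1, h2, h3⟩ := hdeg (q - a) (by linarith)
    exact (ha r ⟨by linarith, h2⟩).not_ge h3
  · push Not at hdeg
    obtain ⟨ε, hε, hlt⟩ := hdeg
    have hεT : q - ε ∈ T := ⟨by linarith, fun r hr => hlt r hr.1 hr.2⟩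
    have hST : {a | a < q ∧ ∀ r ∈ Ioo a q, H r < H q} ⊆ T := fun a ha => ⟨ha.1.le, ha.2⟩
    have hSbdd := hbdd.mono hST
    refine le_antisymm (le_csInf ⟨q, hqT⟩ fun a ha => ?_)
      (csInf_le_csInf hbdd ⟨q - ε, by linarith, hεT.2⟩ hST)
    rcases ha.1.lt_or_eq with hlt | rfl
    · exact csInf_le hSbdd ⟨hlt, ha.2⟩
    · exact (csInf_le hSbdd ⟨by linarith, hεT.2⟩).trans (by linarith)

theorem upperPt_eq_sSup (q : ℝ) :
    upperPt H q = sSup ((↑) '' {b : ℝ | q ≤ b ∧ ∀ r ∈ Ioo q b, H q < H r}) := by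
  set T := {b : ℝ | q ≤ b ∧ ∀ r ∈ Ioo q b, H q < H r}
  have hqT : q ∈ T := ⟨le_rfl, by simp⟩
  unfold upperPt
  split_ifs with hdeg
  · refine le_antisymm (le_sSup (mem_image_of_mem _ hqT)) (sSup_le ?_)
    rintro _ ⟨b, ⟨hqb, hb⟩, rfl⟩
    by_contra! hlt
    obtain ⟨r, h1, h2, h3⟩ := hdeg (b - q) (by linarith [EReal.coe_lt_coe_iff.1 hlt])
    exact (hb r ⟨h1, by linarith⟩).not_ge h3
  · push Not at hdeg
    obtain ⟨ε, hε, hlt⟩ := hdeg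
    have hεS : q + ε ∈ {b : ℝ | q < b ∧ ∀ r ∈ Ioo q b, H q < H r} :=
      ⟨by linarith, fun r hr => hlt r hr.1 hr.2⟩
    refine le_antisymm (sSup_le_sSup (image_mono fun b hb => ⟨hb.1.le, hb.2⟩)) (sSup_le ?_)
    rintro _ ⟨b, hb, rfl⟩
    rcases hb.1.lt_or_eq with hlt | rfl
    · exact le_sSup (mem_image_of_mem _ ⟨hlt, hb.2⟩)
    · exact (EReal.coe_le_coe_iff.2 (by linarith)).trans (le_sSup (mem_image_of_mem _ hεS))

theorem lowerPt_le_self (hHc : Coercive H) (q : ℝ) : lowerPt H q ≤ q := by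
  rw [lowerPt_eq_sInf hHc]
  exact csInf_le (bddBelow_setOf_forall_Ioo_lt hHc q) ⟨le_rfl, by simp⟩

theorem self_le_upperPt (q : ℝ) : (q : EReal) ≤ upperPt H q := by
  rw [upperPt_eq_sSup]
  exact le_sSup (mem_image_of_mem _ ⟨le_rfl, by simp⟩)

theorem lowerPt_le_of_forall_lt {a : ℝ} (hHc : Coercive H) (haq : a ≤ q)
    (h : ∀ r ∈ Ioo a q, H r < H q) : lowerPt H q ≤ a := by
  rw [lowerPt_eq_sInf hHc]
  exact csInf_le (bddBelow_setOf_forall_Ioo_lt hHc q) ⟨haq, h⟩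

theorem le_upperPt_of_forall_lt {b : ℝ} (hqb : q ≤ b) (h : ∀ r ∈ Ioo q b, H q < H r) :
    (b : EReal) ≤ upperPt H q := by
  rw [upperPt_eq_sSup]
  exact le_sSup (mem_image_of_mem _ ⟨hqb, h⟩)

theorem apply_lt_of_lowerPt_lt (hHc : Coercive H) (h₁ : lowerPt H q < x) (h₂ : x < q) :
    H x < H q := by
  rw [lowerPt_eq_sInf hHc] at h₁
  have hne : {a : ℝ | a ≤ q ∧ ∀ r ∈ Ioo a q, H r < H q}.Nonempty :=
    ⟨q, le_rfl, by simp⟩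
  obtain ⟨a, ha, hax⟩ := exists_lt_of_csInf_lt hne h₁
  exact ha.2 x ⟨hax, h₂⟩

theorem apply_lt_of_lt_upperPt (h₁ : q < x) (h₂ : (x : EReal) < upperPt H q) : H q < H x := by
  rw [upperPt_eq_sSup] at h₂
  obtain ⟨_, ⟨b, hb, rfl⟩, hxb⟩ := lt_sSup_iff.1 h₂
  exact hb.2 x ⟨h₁, EReal.coe_lt_coe_iff.1 hxb⟩

theorem apply_le_of_lowerPt_le (hH : Continuous H) (hHc : Coercive H) (h₁ : lowerPt H q ≤ x)
    (h₂ : x ≤ q) : H x ≤ H q := by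
  rcases h₂.lt_or_eq with h₂ | rfl
  · rcases h₁.lt_or_eq with h₁ | rfl
    · exact (apply_lt_of_lowerPt_lt hHc h₁ h₂).le
    · exact (isClosed_le hH continuous_const).Icc_subset_of_Ioo_subset h₂
        (fun y hy => (apply_lt_of_lowerPt_lt hHc hy.1 hy.2).le) (left_mem_Icc.2 h₂.le)
  · exact le_rfl

theorem le_apply_of_le_upperPt (hH : Continuous H) (h₁ : q ≤ x) (h₂ : (x : EReal) ≤ upperPt H q) :
    H q ≤ H x := by
  rcases h₁.lt_or_eq with h₁ | rfl
  · exact (isClosed_le continuous_const hH).Icc_subset_of_Ioo_subset h₁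
      (fun y hy => (apply_lt_of_lt_upperPt hy.1
        ((EReal.coe_lt_coe_iff.2 hy.2).trans_le h₂)).le) (right_mem_Icc.2 h₁.le)
  · exact le_rfl

theorem le_subR (hFa : Antitone F) (hx : p ≤ x) : min (F x) (H x) ≤ subR H F p := by
  refine le_csSup ⟨F p, ?_⟩ (mem_image_of_mem _ hx)
  rintro _ ⟨y, hy, rfl⟩
  exact (min_le_left _ _).trans (hFa hy)

theorem subR_le {c : ℝ} (h : ∀ x, p ≤ x → min (F x) (H x) ≤ c) : subR H F p ≤ c :=
  csSup_le (image_nonempty.2 nonempty_Ici) (forall_mem_image.2 h)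

theorem supR_le (hFa : Antitone F) (hx : x ≤ p) : supR H F p ≤ max (F x) (H x) := by
  refine csInf_le ⟨F p, ?_⟩ (mem_image_of_mem _ hx)
  rintro _ ⟨y, hy, rfl⟩
  exact (hFa hy).trans (le_max_left _ _)

theorem le_supR {c : ℝ} (h : ∀ x, x ≤ p → c ≤ max (F x) (H x)) : c ≤ supR H F p :=
  le_csInf (image_nonempty.2 nonempty_Iic) (forall_mem_image.2 h)

theorem exists_least_isMaxOn_Ici (hH : Continuous H) (hHc : Coercive H) (hF : Continuous F)
    (hFa : Antitone F) (p : ℝ) : ∃ q, p ≤ q ∧ (∀ x, p ≤ x → min (F x) (H x) ≤ min (F q) (H q)) ∧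
      ∀ x ∈ Ico p q, min (F x) (H x) < min (F q) (H q) := by
  obtain ⟨B, hB⟩ := eventually_atTop.1 (hHc.tendsto_atTop.eventually_ge_atTop (F p))
  obtain ⟨q, hq, hmax, hleast⟩ := isCompact_Icc.exists_least_isMaxOn
    (nonempty_Icc.2 (le_max_right B p)) (hF.min hH).continuousOn
  refine ⟨q, hq.1, fun x hx => ?_, fun x hx => hleast x ⟨hx.1, hx.2.le.trans hq.2⟩ hx.2⟩
  rcases le_or_gt x (max B p) with hxB | hxB
  · exact hmax ⟨hx, hxB⟩
  · -- past `max B p`, `F ≤ F p ≤ H`, so `min F H = F` there, and `F` decreases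
    calc min (F x) (H x) ≤ F (max B p) := (min_le_left _ _).trans (hFa hxB.le)
      _ = min (F (max B p)) (H (max B p)) :=
        (min_eq_left ((hFa (le_max_right B p)).trans (hB _ (le_max_left B p)))).symm
      _ ≤ min (F q) (H q) := hmax (right_mem_Icc.2 (le_max_right B p))

theorem exists_greatest_isMinOn_Iic (hH : Continuous H) (hHc : Coercive H) (hF : Continuous F)
    (p : ℝ) : ∃ q, q ≤ p ∧ (∀ x, x ≤ p → max (F q) (H q) ≤ max (F x) (H x)) ∧
      ∀ x ∈ Ioc q p, max (F q) (H q) < max (F x) (H x) := by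
  obtain ⟨B, hB⟩ := eventually_atBot.1 (hHc.tendsto_atBot.eventually_ge_atTop (max (F p) (H p)))
  obtain ⟨q, hq, hmin, hgreatest⟩ := isCompact_Icc.exists_greatest_isMinOn
    (nonempty_Icc.2 (min_le_right B p)) (hF.max hH).continuousOn
  refine ⟨q, hq.2, fun x hx => ?_, fun x hx => hgreatest x ⟨hq.1.trans hx.1.le, hx.2⟩ hx.1⟩
  rcases le_or_gt (min B p) x with hxB | hxB
  · exact hmin ⟨hxB, hx⟩
  · calc max (F q) (H q) ≤ max (F p) (H p) := hmin (right_mem_Icc.2 (min_le_right B p))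
      _ ≤ H x := hB x (hxB.le.trans (min_le_left B p))
      _ ≤ max (F x) (H x) := le_max_right _ _

theorem le_and_lt_of_forall_max_lt {b : ℝ} (hH : Continuous H) (hFa : Antitone F) (hqb : q < b)
    (h : ∀ y ∈ Ioc q b, max (F q) (H q) < max (F y) (H y)) :
    F q ≤ H q ∧ ∀ y ∈ Ioc q b, H q < H y := by
  have hHy : ∀ y ∈ Ioc q b, max (F q) (H q) < H y := fun y hy =>
    (lt_max_iff.1 (h y hy)).resolve_left (not_lt.2 ((hFa hy.1.le).trans (le_max_left _ _)))
  have hq : max (F q) (H q) ≤ H q := (isClosed_le continuous_const hH).Icc_subset_of_Ioo_subset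
    hqb (fun y hy => (hHy y (Ioo_subset_Ioc_self hy)).le) (left_mem_Icc.2 hqb.le)
  exact ⟨(le_max_left _ _).trans hq, fun y hy => (le_max_right _ _).trans_lt (hHy y hy)⟩

theorem le_and_lt_of_forall_lt_min {a : ℝ} (hH : Continuous H) (hFa : Antitone F) (haq : a < q)
    (h : ∀ y ∈ Ico a q, min (F y) (H y) < min (F q) (H q)) :
    H q ≤ F q ∧ ∀ y ∈ Ico a q, H y < H q := by
  have hHy : ∀ y ∈ Ico a q, H y < min (F q) (H q) := fun y hy =>
    (min_lt_iff.1 (h y hy)).resolve_left (not_lt.2 ((min_le_left _ _).trans (hFa hy.2.le)))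
  have hq : H q ≤ min (F q) (H q) := (isClosed_le hH continuous_const).Icc_subset_of_Ioo_subset
    haq (fun y hy => (hHy y (Ioo_subset_Ico_self hy)).le) (right_mem_Icc.2 haq.le)
  exact ⟨hq.trans (min_le_left _ _), fun y hy => (hHy y hy).trans_le (min_le_right _ _)⟩

theorem le_max_of_posLimiter (hH : Continuous H) (hHc : Coercive H) (hF : Continuous F)
    (hFa : Antitone F) (hq : posLimiter H F q) (hx : (x : EReal) ≤ upperPt H q) :
    H q ≤ max (F x) (H x) := by
  by_contra! hlt
  have hxq : x < q := by
    by_contra! hqx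
    exact hlt.not_ge ((le_apply_of_le_upperPt hH hqx hx).trans (le_max_right _ _))
  obtain ⟨q', hq', hmin, hgreatest⟩ := isCompact_Icc.exists_greatest_isMinOn
    (nonempty_Icc.2 hxq.le) (hF.max hH).continuousOn
  have hq'x : max (F q') (H q') < H q := (hmin (left_mem_Icc.2 hxq.le)).trans_lt hlt
  have hq'q : q' < q := hq'.2.lt_of_ne fun h => by
    subst h
    exact hq'x.not_ge (le_max_right _ _)
  obtain ⟨hFq', hHq'⟩ := le_and_lt_of_forall_max_lt hH hFa hq'q
    fun y hy => hgreatest y ⟨hq'.1.trans hy.1.le, hy.2⟩ hy.1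
  have hHq'q : H q' < H q := (le_max_right _ _).trans_lt hq'x
  obtain ⟨r, hqr, hr⟩ := EReal.lt_iff_exists_real_btwn.1 hq.1
  rw [EReal.coe_lt_coe_iff] at hqr
  have hr' : (r : EReal) ≤ upperPt H q' := le_upperPt_of_forall_lt (hq'q.trans hqr).le
    fun y hy => by
      rcases le_or_gt y q with hyq | hqy
      · exact hHq' y ⟨hy.1, hyq⟩
      · exact hHq'q.trans (apply_lt_of_lt_upperPt hqy ((EReal.coe_lt_coe_iff.2 hy.2).trans hr))
  refine eq_empty_iff_forall_notMem.1 (hq.2.2 q' hHq'q hFq') ((q + r) / 2) ⟨⟨?_, ?_⟩, ?_, ?_⟩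
  · exact (lowerPt_le_self hHc q').trans_lt (by linarith)
  · exact (EReal.coe_lt_coe_iff.2 (by linarith)).trans_le hr'
  · linarith
  · exact (EReal.coe_lt_coe_iff.2 (by linarith)).trans hr

theorem min_le_of_negLimiter (hH : Continuous H) (hHc : Coercive H) (hF : Continuous F)
    (hFa : Antitone F) (hq : negLimiter H F q) (hx : lowerPt H q ≤ x) :
    min (F x) (H x) ≤ H q := by
  by_contra! hlt
  have hqx : q < x := by
    by_contra! hxq
    exact hlt.not_ge ((min_le_right _ _).trans (apply_le_of_lowerPt_le hH hHc hx hxq))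
  obtain ⟨q', hq', hmax, hleast⟩ := isCompact_Icc.exists_least_isMaxOn
    (nonempty_Icc.2 hqx.le) (hF.min hH).continuousOn
  have hq'x : H q < min (F q') (H q') := hlt.trans_le (hmax (right_mem_Icc.2 hqx.le))
  have hqq' : q < q' := hq'.1.lt_of_ne' fun h => by
    subst h
    exact hq'x.not_ge (min_le_right _ _)
  obtain ⟨hFq', hHq'⟩ := le_and_lt_of_forall_lt_min hH hFa hqq'
    fun y hy => hleast y ⟨hy.1, hy.2.le.trans hq'.2⟩ hy.2
  have hHqq' : H q < H q' := hq'x.trans_le (min_le_right _ _)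
  have hlow : lowerPt H q' ≤ lowerPt H q :=
    lowerPt_le_of_forall_lt hHc ((lowerPt_le_self hHc q).trans hqq'.le) fun y hy => by
      rcases lt_or_ge y q with hyq | hqy
      · exact (apply_lt_of_lowerPt_lt hHc hy.1 hyq).trans hHqq'
      · exact hHq' y ⟨hqy, hy.2⟩
  have hq₁ := hq.1
  refine eq_empty_iff_forall_notMem.1 (hq.2.2 q' hFq' hHqq') ((lowerPt H q + q) / 2)
    ⟨⟨hlow.trans_lt (by linarith), ?_⟩, by linarith, by linarith⟩
  exact (EReal.coe_lt_coe_iff.2 (by linarith)).trans_le (self_le_upperPt q')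

theorem min_le_of_lowerPt_le (hH : Continuous H) (hHc : Coercive H) (hFa : Antitone F)
    (hFq : F q ≤ H q) (hx : lowerPt H q ≤ x) : min (F x) (H x) ≤ H q := by
  rcases le_total q x with hqx | hxq
  · exact (min_le_left _ _).trans ((hFa hqx).trans hFq)
  · exact (min_le_right _ _).trans (apply_le_of_lowerPt_le hH hHc hx hxq)

theorem le_max_of_le_upperPt (hH : Continuous H) (hFa : Antitone F) (hFq : H q ≤ F q)
    (hx : (x : EReal) ≤ upperPt H q) : H q ≤ max (F x) (H x) := by
  rcases le_total x q with hxq | hqx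
  · exact (hFq.trans (hFa hxq)).trans (le_max_left _ _)
  · exact (le_apply_of_le_upperPt hH hqx hx).trans (le_max_right _ _)

theorem le_apply_of_posLimiter (hH : Continuous H) (hHc : Coercive H) (hF : Continuous F)
    (hFa : Antitone F) (hq : posLimiter H F q) (hp : lowerPt H q ≤ p) (hpq : p < q) :
    H q ≤ F q := by
  refine (isClosed_le continuous_const hF).Icc_subset_of_Ioo_subset hpq (fun x hx => ?_)
    (right_mem_Icc.2 hpq.le)
  have hmax := le_max_of_posLimiter hH hHc hF hFa hq
    ((EReal.coe_le_coe_iff.2 hx.2.le).trans (self_le_upperPt q))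
  exact (le_max_iff.1 hmax).resolve_right
    (apply_lt_of_lowerPt_lt hHc (hp.trans_lt hx.1) hx.2).not_ge

theorem apply_le_of_negLimiter (hH : Continuous H) (hHc : Coercive H) (hF : Continuous F)
    (hFa : Antitone F) (hq : negLimiter H F q) (hqp : q < p) (hp : (p : EReal) ≤ upperPt H q) :
    F q ≤ H q := by
  refine (isClosed_le hF continuous_const).Icc_subset_of_Ioo_subset hqp (fun x hx => ?_)
    (left_mem_Icc.2 hqp.le)
  have hmin := min_le_of_negLimiter hH hHc hF hFa hq ((lowerPt_le_self hHc q).trans hx.1.le)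
  exact (min_le_iff.1 hmin).resolve_right
    (apply_lt_of_lt_upperPt hx.1 ((EReal.coe_lt_coe_iff.2 hx.2).trans_le hp)).not_ge

theorem relax_eq_of_subR_le_le_supR (hH : Continuous H) (hHc : Coercive H) (hFa : Antitone F)
    (hl : lowerPt H q ≤ p) (hu : (p : EReal) ≤ upperPt H q) (hsub : subR H F p ≤ H q)
    (hsup : H q ≤ supR H F p) (hlt : p < q → H q ≤ F q) (hgt : q < p → F q ≤ H q) :
    relax H F p = H q := by
  unfold relax
  split_ifs with hp
  · refine hsub.antisymm ?_
    rcases lt_or_ge q p with hqp | hpq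
    · have hHp := le_apply_of_le_upperPt hH hqp.le hu
      exact (le_min (hHp.trans hp) hHp).trans (le_subR hFa le_rfl)
    · have hFq : H q ≤ F q := hpq.lt_or_eq.elim hlt fun h => h ▸ hp
      exact (le_min hFq le_rfl).trans (le_subR hFa hpq)
  · refine le_antisymm ?_ hsup
    push Not at hp
    rcases lt_or_ge p q with hpq | hqp
    · have hHp := apply_le_of_lowerPt_le hH hHc hl hpq.le
      exact (supR_le hFa le_rfl).trans (max_le (hp.le.trans hHp) hHp)
    · have hFq : F q ≤ H q := hqp.lt_or_eq.elim hgt fun h => h ▸ hp.le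
      exact (supR_le hFa hqp).trans (max_le hFq le_rfl)

theorem relax_eq_of_posLimiter (hH : Continuous H) (hHc : Coercive H) (hF : Continuous F)
    (hFa : Antitone F) (hq : posLimiter H F q) (hl : lowerPt H q ≤ p)
    (hu : (p : EReal) ≤ upperPt H q) : relax H F p = H q :=
  relax_eq_of_subR_le_le_supR hH hHc hFa hl hu
    (subR_le fun _ hx => min_le_of_lowerPt_le hH hHc hFa hq.2.1 (hl.trans hx))
    (le_supR fun _ hx =>
      le_max_of_posLimiter hH hHc hF hFa hq ((EReal.coe_le_coe_iff.2 hx).trans hu))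
    (le_apply_of_posLimiter hH hHc hF hFa hq hl) fun _ => hq.2.1

theorem relax_eq_of_negLimiter (hH : Continuous H) (hHc : Coercive H) (hF : Continuous F)
    (hFa : Antitone F) (hq : negLimiter H F q) (hl : lowerPt H q ≤ p)
    (hu : (p : EReal) ≤ upperPt H q) : relax H F p = H q :=
  relax_eq_of_subR_le_le_supR hH hHc hFa hl hu
    (subR_le fun _ hx => min_le_of_negLimiter hH hHc hF hFa hq (hl.trans hx))
    (le_supR fun _ hx => le_max_of_le_upperPt hH hFa hq.2.1 ((EReal.coe_le_coe_iff.2 hx).trans hu))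
    (fun _ => hq.2.1) fun hqp => apply_le_of_negLimiter hH hHc hF hFa hq hqp hu

theorem exists_negLimiter_of_lt_subR (hH : Continuous H) (hHc : Coercive H) (hF : Continuous F)
    (hFa : Antitone F) (h : H p < subR H F p) :
    ∃ q, negLimiter H F q ∧ lowerPt H q ≤ p ∧ (p : EReal) ≤ upperPt H q := by
  obtain ⟨q, hpq, hmax, hleast⟩ := exists_least_isMaxOn_Ici hH hHc hF hFa p
  have hc : H p < min (F q) (H q) := h.trans_le (subR_le hmax)
  replace hpq : p < q := hpq.lt_of_ne fun h => by
    subst h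
    exact hc.not_ge (min_le_right _ _)
  obtain ⟨hFq, hHq⟩ := le_and_lt_of_forall_lt_min hH hFa hpq hleast
  have hl : lowerPt H q ≤ p :=
    lowerPt_le_of_forall_lt hHc hpq.le fun y hy => hHq y ⟨hy.1.le, hy.2⟩
  refine ⟨q, ⟨hl.trans_lt hpq, hFq, fun q' hFq' hHq' => ?_⟩, hl,
    (EReal.coe_le_coe_iff.2 hpq.le).trans (self_le_upperPt q)⟩
  have hq'p : q' < p := by
    by_contra! hpq'
    have := hmax q' hpq'
    rw [min_eq_right hFq', min_eq_right hFq] at this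
    exact this.not_gt hHq'
  refine eq_empty_iff_forall_notMem.2 fun y ⟨⟨_, hy₂⟩, hy₃, hy₄⟩ => ?_
  have hHy : H y < H q := apply_lt_of_lowerPt_lt hHc hy₃ hy₄
  have hyq' : y < q' := by
    by_contra! hq'y
    exact (le_apply_of_le_upperPt hH hq'y hy₂.le).not_gt (hHy.trans hHq')
  exact (apply_lt_of_lowerPt_lt hHc (hy₃.trans hyq') (hq'p.trans hpq)).not_gt hHq'

theorem exists_posLimiter_of_supR_lt (hH : Continuous H) (hHc : Coercive H) (hF : Continuous F)
    (hFa : Antitone F) (h : supR H F p < H p) :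
    ∃ q, posLimiter H F q ∧ lowerPt H q ≤ p ∧ (p : EReal) ≤ upperPt H q := by
  obtain ⟨q, hqp, hmin, hgreatest⟩ := exists_greatest_isMinOn_Iic hH hHc hF p
  have hc : max (F q) (H q) < H p := (le_supR hmin).trans_lt h
  replace hqp : q < p := hqp.lt_of_ne fun h => by
    subst h
    exact hc.not_ge (le_max_right _ _)
  obtain ⟨hFq, hHq⟩ := le_and_lt_of_forall_max_lt hH hFa hqp hgreatest
  have hu : (p : EReal) ≤ upperPt H q :=
    le_upperPt_of_forall_lt hqp.le fun y hy => hHq y ⟨hy.1, hy.2.le⟩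
  refine ⟨q, ⟨(EReal.coe_lt_coe_iff.2 hqp).trans_le hu, hFq, fun q' hHq' hFq' => ?_⟩,
    (lowerPt_le_self hHc q).trans hqp.le, hu⟩
  have hpq' : p < q' := by
    by_contra! hq'p
    have := hmin q' hq'p
    rw [max_eq_right hFq', max_eq_right hFq] at this
    exact this.not_gt hHq'
  refine eq_empty_iff_forall_notMem.2 fun y ⟨⟨hy₁, _⟩, hy₃, hy₄⟩ => ?_
  have hHy : H q < H y := apply_lt_of_lt_upperPt hy₃ hy₄
  have hq'y : q' < y := by
    by_contra! hyq'
    exact (apply_le_of_lowerPt_le hH hHc hy₁.le hyq').not_gt (hHq'.trans hHy)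
  exact (apply_lt_of_lt_upperPt (hqp.trans hpq')
    ((EReal.coe_lt_coe_iff.2 hq'y).trans hy₄)).not_gt hHq'

theorem relax_eq_self_or_exists_limiter (hH : Continuous H) (hHc : Coercive H)
    (hF : Continuous F) (hFa : Antitone F) (p : ℝ) :
    relax H F p = H p ∨ ∃ q, (posLimiter H F q ∨ negLimiter H F q) ∧
      lowerPt H q ≤ p ∧ (p : EReal) ≤ upperPt H q := by
  unfold relax
  split_ifs with hp
  · rcases (min_eq_right hp ▸ le_subR hFa le_rfl : H p ≤ subR H F p).lt_or_eq with hlt | heq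
    · obtain ⟨q, hq, hl, hu⟩ := exists_negLimiter_of_lt_subR hH hHc hF hFa hlt
      exact Or.inr ⟨q, Or.inr hq, hl, hu⟩
    · exact Or.inl heq.symm
  · push Not at hp
    rcases (max_eq_right hp.le ▸ supR_le hFa le_rfl : supR H F p ≤ H p).lt_or_eq with hlt | heq
    · obtain ⟨q, hq, hl, hu⟩ := exists_posLimiter_of_supR_lt hH hHc hF hFa hlt
      exact Or.inr ⟨q, Or.inl hq, hl, hu⟩
    · exact Or.inl heq

end Relaxation

theorem relax_eq_guerand_general (H F0 : ℝ → ℝ)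
    (hH : Continuous H) (hHc : Coercive H)
    (hF : Continuous F0) (hFa : Antitone F0) :
    (∀ q : ℝ, (posLimiter H F0 q ∨ negLimiter H F0 q) →
      ∀ p : ℝ, lowerPt H q ≤ p → (p : EReal) ≤ upperPt H q → relax H F0 p = H q) ∧
    (∀ p : ℝ,
      (¬ ∃ q : ℝ, (posLimiter H F0 q ∨ negLimiter H F0 q) ∧
        lowerPt H q ≤ p ∧ (p : EReal) ≤ upperPt H q) →
      relax H F0 p = H p) := by
  refine ⟨fun q hq p hl hu => ?_, fun p hp => ?_⟩
  · rcases hq with hq | hq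
    · exact Relaxation.relax_eq_of_posLimiter hH hHc hF hFa hq hl hu
    · exact Relaxation.relax_eq_of_negLimiter hH hHc hF hFa hq hl hu
  · exact (Relaxation.relax_eq_self_or_exists_limiter hH hHc hF hFa p).resolve_right hp

/-- The relaxation `ℜF0` coincides with Guerand's relaxed boundary function. -/
theorem relax_eq_guerand (H F0 : ℝ → ℝ)
    (hH : Continuous H) (hHc : Coercive H)
    (hF : Continuous F0) (hFa : Antitone F0) (hFs : SemiCoercive F0) :
    (∀ q : ℝ, (posLimiter H F0 q ∨ negLimiter H F0 q) →
      ∀ p : ℝ, lowerPt H q ≤ p → (p : EReal) ≤ upperPt H q → relax H F0 p = H q) ∧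
    (∀ p : ℝ,
      (¬ ∃ q : ℝ, (posLimiter H F0 q ∨ negLimiter H F0 q) ∧
        lowerPt H q ≤ p ∧ (p : EReal) ≤ upperPt H q) →
      relax H F0 p = H p) :=
  relax_eq_guerand_general H F0 hH hHc hF hFa
end
end
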